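/- Let ε ∈ (0, 1) and let 0 ≤ a₁ ≤ a₂. If r₁ > 0 and r₂ > 0 satisfy Q₁(a₁, r₁) = ε and Q₁(a₂, r₂) = ε, then r₁ ≤ r₂. That is, the radius r_min achieving outage level ε is nondecreasing in the noncentrality parameter a. -/

import Mathlib

open MeasureTheory Real

/-- Modified Bessel function of the first kind, order 0 (integral representation). -/
noncomputable def I0 (x : ℝ) : ℝ :=
  (1 / Real.pi) * ∫ θ in (0 : ℝ)..Real.pi, Real.exp (x * Real.cos θ)

/-- First-order Marcum Q-function. -/
noncomputable def marcumQ (a b : ℝ) : ℝ :=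
  ∫ x in Set.Ioi b, x * Real.exp (-(x ^ 2 + a ^ 2) / 2) * I0 (a * x)

section Aux
open intervalIntegral Set Filter Metric

/-- `I₁ = I₀'`. -/
noncomputable def besselI1 (x : ℝ) : ℝ :=
  (1 / Real.pi) * ∫ θ in (0 : ℝ)..Real.pi, Real.cos θ * Real.exp (x * Real.cos θ)

/-- `I₁' `. -/
noncomputable def besselI2 (x : ℝ) : ℝ :=
  (1 / Real.pi) * ∫ θ in (0 : ℝ)..Real.pi, (Real.cos θ)^2 * Real.exp (x * Real.cos θ)

lemma cont_k (x : ℝ) (k : ℕ) :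
    Continuous fun θ : ℝ => (Real.cos θ)^k * Real.exp (x * Real.cos θ) := by fun_prop

lemma abs_k_le (y θ : ℝ) (k : ℕ) : |(Real.cos θ)^k * Real.exp (y * Real.cos θ)| ≤ Real.exp |y| := by
  rw [abs_mul, abs_pow]
  have h0 : |Real.cos θ| ^ k ≤ 1 := pow_le_one₀ (abs_nonneg _) (abs_cos_le_one θ)
  have h2 : y * Real.cos θ ≤ |y| := by
    calc y * Real.cos θ ≤ |y * Real.cos θ| := le_abs_self _
      _ = |y| * |Real.cos θ| := abs_mul _ _
      _ ≤ |y| * 1 := by nlinarith [abs_cos_le_one θ, abs_nonneg y]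
      _ = |y| := mul_one _
  calc |Real.cos θ| ^ k * |Real.exp (y * Real.cos θ)|
      ≤ 1 * Real.exp |y| := by
        apply mul_le_mul h0 ?_ (abs_nonneg _) zero_le_one
        rw [abs_of_pos (Real.exp_pos _)]; exact Real.exp_le_exp.2 h2
    _ = Real.exp |y| := one_mul _

lemma hasDerivAt_Ik (x : ℝ) (k : ℕ) :
    HasDerivAt (fun y : ℝ => (1 / Real.pi) * ∫ θ in (0:ℝ)..Real.pi, (Real.cos θ)^k * Real.exp (y * Real.cos θ))
      ((1 / Real.pi) * ∫ θ in (0:ℝ)..Real.pi, (Real.cos θ)^(k+1) * Real.exp (x * Real.cos θ)) x := by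
  have key : HasDerivAt (fun y : ℝ => ∫ θ in (0:ℝ)..Real.pi, (Real.cos θ)^k * Real.exp (y * Real.cos θ))
      (∫ θ in (0:ℝ)..Real.pi, (Real.cos θ)^(k+1) * Real.exp (x * Real.cos θ)) x := by
    have := intervalIntegral.hasDerivAt_integral_of_dominated_loc_of_deriv_le
      (F := fun y θ => (Real.cos θ)^k * Real.exp (y * Real.cos θ))
      (F' := fun y θ => (Real.cos θ)^(k+1) * Real.exp (y * Real.cos θ))
      (bound := fun _ => Real.exp (|x| + 1)) (a := (0:ℝ)) (b := Real.pi) (x₀ := x)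
      (μ := volume) (Metric.ball_mem_nhds x one_pos)
      (Filter.Eventually.of_forall fun y => (cont_k y k).aestronglyMeasurable.restrict)
      ((cont_k x k).intervalIntegrable _ _)
      ((cont_k x (k+1)).aestronglyMeasurable.restrict)
      (Filter.Eventually.of_forall fun θ _ => fun y hy => ?_)
      (intervalIntegrable_const)
      (Filter.Eventually.of_forall fun θ _ => fun y _ => ?_)
    · exact this.2
    · show ‖(Real.cos θ)^(k+1) * Real.exp (y * Real.cos θ)‖ ≤ _
      rw [Real.norm_eq_abs]
      refine le_trans (abs_k_le y θ (k+1)) (Real.exp_le_exp.2 ?_)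
      have h : |y - x| < 1 := by simpa [Real.norm_eq_abs] using mem_ball_iff_norm.1 hy
      calc |y| = |x + (y - x)| := by ring_nf
        _ ≤ |x| + |y - x| := abs_add_le _ _
        _ ≤ |x| + 1 := by linarith
    · have h := (((hasDerivAt_id y).mul_const (Real.cos θ)).exp).const_mul ((Real.cos θ)^k)
      simpa [pow_succ, mul_comm, mul_assoc, mul_left_comm] using h
  exact key.const_mul (1 / Real.pi)

lemma hasDerivAt_I0 (x : ℝ) : HasDerivAt I0 (besselI1 x) x := by
  have h := hasDerivAt_Ik x 0
  simp only [pow_zero, one_mul, zero_add, pow_one] at h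
  exact h

lemma hasDerivAt_I1 (x : ℝ) : HasDerivAt besselI1 (besselI2 x) x := by
  have h := hasDerivAt_Ik x 1
  simp only [pow_one] at h
  exact h

lemma I0_continuous : Continuous I0 :=
  continuous_iff_continuousAt.2 fun x => (hasDerivAt_I0 x).continuousAt

lemma I1_continuous : Continuous besselI1 :=
  continuous_iff_continuousAt.2 fun x => (hasDerivAt_I1 x).continuousAt

/-- Bessel identity. -/
lemma bessel_identity (y : ℝ) : besselI1 y + y * besselI2 y = y * I0 y := by
  have hder : ∀ θ ∈ Set.uIcc (0:ℝ) Real.pi,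
      HasDerivAt (fun θ : ℝ => Real.sin θ * Real.exp (y * Real.cos θ))
        (Real.cos θ * Real.exp (y * Real.cos θ) - y * (Real.sin θ)^2 * Real.exp (y * Real.cos θ)) θ := by
    intro θ _
    have h1 : HasDerivAt (fun θ : ℝ => Real.exp (y * Real.cos θ))
        (y * (-Real.sin θ) * Real.exp (y * Real.cos θ)) θ := by
      have := ((Real.hasDerivAt_cos θ).const_mul y).exp
      simpa [mul_comm] using this
    have := (Real.hasDerivAt_sin θ).mul h1
    exact this.congr_deriv (by ring)
  have hint : ∫ θ in (0:ℝ)..Real.pi,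
      (Real.cos θ * Real.exp (y * Real.cos θ) - y * (Real.sin θ)^2 * Real.exp (y * Real.cos θ))
      = 0 := by
    rw [intervalIntegral.integral_eq_sub_of_hasDerivAt hder (by
      apply Continuous.intervalIntegrable; fun_prop)]
    simp
  have hsin : ∀ θ : ℝ, (Real.sin θ)^2 = 1 - (Real.cos θ)^2 := by
    intro θ; have := Real.sin_sq_add_cos_sq θ; linarith
  have e1 : ∫ θ in (0:ℝ)..Real.pi, Real.cos θ * Real.exp (y * Real.cos θ)
      = y * ((∫ θ in (0:ℝ)..Real.pi, Real.exp (y * Real.cos θ))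
          - ∫ θ in (0:ℝ)..Real.pi, (Real.cos θ)^2 * Real.exp (y * Real.cos θ)) := by
    have h2 : ∫ θ in (0:ℝ)..Real.pi, (Real.cos θ * Real.exp (y * Real.cos θ)
        - y * (Real.sin θ)^2 * Real.exp (y * Real.cos θ))
        = (∫ θ in (0:ℝ)..Real.pi, Real.cos θ * Real.exp (y * Real.cos θ))
          - ∫ θ in (0:ℝ)..Real.pi, y * (Real.sin θ)^2 * Real.exp (y * Real.cos θ) := by
      apply intervalIntegral.integral_sub
      · simpa [pow_one] using (cont_k y 1).intervalIntegrable (0:ℝ) Real.pi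
      · apply Continuous.intervalIntegrable; fun_prop
    have h3 : ∫ θ in (0:ℝ)..Real.pi, y * (Real.sin θ)^2 * Real.exp (y * Real.cos θ)
        = y * ((∫ θ in (0:ℝ)..Real.pi, Real.exp (y * Real.cos θ))
          - ∫ θ in (0:ℝ)..Real.pi, (Real.cos θ)^2 * Real.exp (y * Real.cos θ)) := by
      have : ∀ θ : ℝ, y * (Real.sin θ)^2 * Real.exp (y * Real.cos θ)
          = y * (Real.exp (y * Real.cos θ) - (Real.cos θ)^2 * Real.exp (y * Real.cos θ)) := by
        intro θ; rw [hsin θ]; ring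
      simp_rw [this]
      rw [intervalIntegral.integral_const_mul, intervalIntegral.integral_sub]
      · simpa using (cont_k y 0).intervalIntegrable (0:ℝ) Real.pi
      · exact (cont_k y 2).intervalIntegrable (0:ℝ) Real.pi
    rw [h2, h3] at hint
    linarith
  simp only [I0, besselI1, besselI2]
  rw [e1]; ring

lemma I0_pos (y : ℝ) : 0 < I0 y := by
  have : 0 < ∫ θ in (0:ℝ)..Real.pi, Real.exp (y * Real.cos θ) := by
    apply intervalIntegral.intervalIntegral_pos_of_pos_on
    · apply Continuous.intervalIntegrable; fun_prop
    · intro θ _; exact Real.exp_pos _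
    · exact Real.pi_pos
  exact mul_pos (by positivity) this

lemma Ik_abs_le (y : ℝ) (k : ℕ) :
    |(1 / Real.pi) * ∫ θ in (0:ℝ)..Real.pi, (Real.cos θ)^k * Real.exp (y * Real.cos θ)| ≤ Real.exp |y| := by
  rw [abs_mul]
  have h1 : |∫ θ in (0:ℝ)..Real.pi, (Real.cos θ)^k * Real.exp (y * Real.cos θ)|
      ≤ Real.exp |y| * |Real.pi - 0| := by
    have := intervalIntegral.norm_integral_le_of_norm_le_const
      (C := Real.exp |y|) (a := (0:ℝ)) (b := Real.pi)
      (f := fun θ : ℝ => (Real.cos θ)^k * Real.exp (y * Real.cos θ))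
      (fun θ _ => abs_k_le y θ k)
    simpa [Real.norm_eq_abs] using this
  have hpi : |1 / Real.pi| = 1 / Real.pi := abs_of_pos (by positivity)
  rw [hpi]
  calc (1/Real.pi) * |∫ θ in (0:ℝ)..Real.pi, (Real.cos θ)^k * Real.exp (y * Real.cos θ)|
      ≤ (1/Real.pi) * (Real.exp |y| * |Real.pi - 0|) := by
        apply mul_le_mul_of_nonneg_left h1 (by positivity)
    _ = Real.exp |y| := by
        rw [sub_zero, abs_of_pos Real.pi_pos]
        field_simp

lemma I0_abs_le (y : ℝ) : |I0 y| ≤ Real.exp |y| := by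
  have := Ik_abs_le y 0; simpa [I0] using this
lemma I1_abs_le (y : ℝ) : |besselI1 y| ≤ Real.exp |y| := by
  have := Ik_abs_le y 1; simpa [besselI1] using this

lemma I2_pos (y : ℝ) : 0 < besselI2 y := by
  have hsplit : ∫ θ in (0:ℝ)..Real.pi, (Real.cos θ)^2 * Real.exp (y * Real.cos θ)
      = (∫ θ in (0:ℝ)..(Real.pi/2), (Real.cos θ)^2 * Real.exp (y * Real.cos θ))
        + ∫ θ in (Real.pi/2)..Real.pi, (Real.cos θ)^2 * Real.exp (y * Real.cos θ) := by
    rw [intervalIntegral.integral_add_adjacent_intervals] <;>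
      exact (cont_k y 2).intervalIntegrable _ _
  have h1 : 0 < ∫ θ in (0:ℝ)..(Real.pi/2), (Real.cos θ)^2 * Real.exp (y * Real.cos θ) := by
    apply intervalIntegral.intervalIntegral_pos_of_pos_on
      ((cont_k y 2).intervalIntegrable _ _)
    · intro θ hθ
      have hc : 0 < Real.cos θ := Real.cos_pos_of_mem_Ioo ⟨by linarith [hθ.1, Real.pi_pos], hθ.2⟩
      positivity
    · positivity
  have h2 : 0 ≤ ∫ θ in (Real.pi/2)..Real.pi, (Real.cos θ)^2 * Real.exp (y * Real.cos θ) := by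
    apply intervalIntegral.integral_nonneg (by linarith [Real.pi_pos])
    intro θ _; positivity
  have : 0 < ∫ θ in (0:ℝ)..Real.pi, (Real.cos θ)^2 * Real.exp (y * Real.cos θ) := by
    rw [hsplit]; linarith
  exact mul_pos (by positivity) this

lemma I1_zero : besselI1 0 = 0 := by simp [besselI1]

lemma I1_nonneg {y : ℝ} (hy : 0 ≤ y) : 0 ≤ besselI1 y := by
  have hmono : MonotoneOn besselI1 (Set.Ici (0:ℝ)) := by
    apply monotoneOn_of_deriv_nonneg (convex_Ici 0)
    · exact fun x _ => (hasDerivAt_I1 x).continuousAt.continuousWithinAt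
    · exact fun x _ => (hasDerivAt_I1 x).differentiableAt.differentiableWithinAt
    · intro x _
      rw [(hasDerivAt_I1 x).deriv]
      exact (I2_pos x).le
  have := hmono Set.self_mem_Ici (Set.mem_Ici.2 hy) hy
  rwa [I1_zero] at this

/-- Master integrability lemma. -/
lemma integrable_master (c : ℝ) :
    Integrable (fun x : ℝ => (1+|x|)^3 * Real.exp (c * |x| - x^2/2)) := by
  have hcont : Continuous (fun x : ℝ => (1+|x|)^3 * Real.exp (c * |x| - x^2/2)) := by fun_prop
  apply Integrable.mono'
    ((integrable_exp_neg_mul_sq (by norm_num : (0:ℝ) < 1/4)).const_mul (Real.exp ((c+3)^2)))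
    hcont.aestronglyMeasurable
  refine Filter.Eventually.of_forall fun x => ?_
  rw [Real.norm_eq_abs]
  have h1 : (0:ℝ) < 1 + |x| := by positivity
  rw [abs_of_pos (by positivity)]
  have h2 : (1+|x|)^3 ≤ Real.exp (3 * |x|) := by
    have := Real.add_one_le_exp |x|
    calc (1+|x|)^3 ≤ (Real.exp |x|)^3 := by
          apply pow_le_pow_left₀ h1.le; linarith
      _ = Real.exp (3 * |x|) := by rw [← Real.exp_nat_mul]; ring_nf
  have h3 : (c+3) * |x| ≤ x^2/4 + (c+3)^2 := by
    nlinarith [sq_nonneg (|x|/2 - (c+3)), sq_abs x]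
  calc (1+|x|)^3 * Real.exp (c * |x| - x^2/2)
      ≤ Real.exp (3*|x|) * Real.exp (c * |x| - x^2/2) := by
        apply mul_le_mul_of_nonneg_right h2 (Real.exp_pos _).le
    _ = Real.exp ((c+3) * |x| - x^2/2) := by rw [← Real.exp_add]; ring_nf
    _ ≤ Real.exp (x^2/4 + (c+3)^2 - x^2/2) := by
        apply Real.exp_le_exp.2; linarith
    _ = Real.exp ((c+3)^2) * Real.exp (-(1/4) * x^2) := by
        rw [← Real.exp_add]; ring_nf

lemma cont_f (a : ℝ) :
    Continuous (fun x : ℝ => x * Real.exp (-(x ^ 2 + a ^ 2) / 2) * I0 (a * x)) := by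
  apply Continuous.mul
  · fun_prop
  · exact I0_continuous.comp (by fun_prop)

lemma cont_f' (a : ℝ) :
    Continuous (fun x : ℝ => x * Real.exp (-(x ^ 2 + a ^ 2) / 2)
      * (x * besselI1 (a * x) - a * I0 (a * x))) := by
  apply Continuous.mul
  · fun_prop
  · apply Continuous.sub
    · exact continuous_id.mul (I1_continuous.comp (by fun_prop))
    · exact continuous_const.mul (I0_continuous.comp (by fun_prop))

/-- The integrand of the Marcum Q is dominated. -/
lemma f_abs_le (a x : ℝ) :
    ‖x * Real.exp (-(x ^ 2 + a ^ 2) / 2) * I0 (a * x)‖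
      ≤ (1+|x|)^3 * Real.exp (|a| * |x| - x^2/2) := by
  rw [Real.norm_eq_abs, abs_mul, abs_mul, abs_of_pos (Real.exp_pos _)]
  have h1 : |I0 (a*x)| ≤ Real.exp (|a| * |x|) := by
    have := I0_abs_le (a*x); rwa [abs_mul] at this
  have h2 : Real.exp (-(x^2+a^2)/2) ≤ Real.exp (-(x^2)/2) := by
    apply Real.exp_le_exp.2; nlinarith [sq_nonneg a]
  calc |x| * Real.exp (-(x^2+a^2)/2) * |I0 (a*x)|
      ≤ (1+|x|)^3 * Real.exp (-(x^2)/2) * Real.exp (|a| * |x|) := by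
        apply mul_le_mul _ h1 (abs_nonneg _) (by positivity)
        apply mul_le_mul _ h2 (Real.exp_pos _).le (by positivity)
        nlinarith [abs_nonneg x, sq_nonneg (1+|x|)]
    _ = (1+|x|)^3 * Real.exp (|a| * |x| - x^2/2) := by
        rw [mul_assoc, ← Real.exp_add]; ring_nf

lemma integrableOn_f (a b : ℝ) :
    IntegrableOn (fun x : ℝ => x * Real.exp (-(x ^ 2 + a ^ 2) / 2) * I0 (a * x)) (Set.Ioi b) := by
  apply Integrable.mono' ((integrable_master |a|).restrict (s := Set.Ioi b))
    (cont_f a).aestronglyMeasurable.restrict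
  exact Filter.Eventually.of_forall fun x => f_abs_le a x

/-- Bound for ∂/∂a of the integrand, uniform for `|a| ≤ A`. -/
lemma f'_abs_le {A a : ℝ} (x : ℝ) (hA : 0 ≤ A) (ha : |a| ≤ A) :
    ‖x * Real.exp (-(x ^ 2 + a ^ 2) / 2) * (x * besselI1 (a * x) - a * I0 (a * x))‖
      ≤ (1+A) * ((1+|x|)^3 * Real.exp (A * |x| - x^2/2)) := by
  rw [Real.norm_eq_abs, abs_mul, abs_mul, abs_of_pos (Real.exp_pos _)]
  have hax : |a * x| ≤ A * |x| := by
    rw [abs_mul]; exact mul_le_mul_of_nonneg_right ha (abs_nonneg _)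
  have h1 : |besselI1 (a*x)| ≤ Real.exp (A * |x|) :=
    le_trans (I1_abs_le _) (Real.exp_le_exp.2 hax)
  have h0 : |I0 (a*x)| ≤ Real.exp (A * |x|) :=
    le_trans (I0_abs_le _) (Real.exp_le_exp.2 hax)
  have h2 : Real.exp (-(x^2+a^2)/2) ≤ Real.exp (-(x^2)/2) := by
    apply Real.exp_le_exp.2; nlinarith [sq_nonneg a]
  have h3 : |x * besselI1 (a*x) - a * I0 (a*x)| ≤ (|x| + A) * Real.exp (A * |x|) := by
    calc |x * besselI1 (a*x) - a * I0 (a*x)|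
        ≤ |x * besselI1 (a*x)| + |a * I0 (a*x)| := abs_sub _ _
      _ = |x| * |besselI1 (a*x)| + |a| * |I0 (a*x)| := by rw [abs_mul, abs_mul]
      _ ≤ |x| * Real.exp (A*|x|) + A * Real.exp (A*|x|) := by
          apply add_le_add
          · exact mul_le_mul_of_nonneg_left h1 (abs_nonneg _)
          · apply mul_le_mul ha h0 (abs_nonneg _) hA
      _ = (|x| + A) * Real.exp (A * |x|) := by ring
  calc |x| * Real.exp (-(x^2+a^2)/2) * |x * besselI1 (a*x) - a * I0 (a*x)|
      ≤ |x| * Real.exp (-(x^2)/2) * ((|x| + A) * Real.exp (A * |x|)) := by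
        apply mul_le_mul _ h3 (abs_nonneg _) (by positivity)
        exact mul_le_mul_of_nonneg_left h2 (abs_nonneg _)
    _ = (|x| * (|x| + A)) * (Real.exp (-(x^2)/2) * Real.exp (A * |x|)) := by ring
    _ ≤ ((1+A) * (1+|x|)^3) * (Real.exp (-(x^2)/2) * Real.exp (A * |x|)) := by
        apply mul_le_mul_of_nonneg_right _ (by positivity)
        nlinarith [abs_nonneg x, hA, mul_nonneg hA (abs_nonneg x), sq_nonneg (|x|),
          mul_nonneg (mul_nonneg (abs_nonneg x) (abs_nonneg x)) (abs_nonneg x),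
          mul_nonneg hA (mul_nonneg (abs_nonneg x) (abs_nonneg x)),
          mul_nonneg (mul_nonneg hA (abs_nonneg x)) (mul_nonneg (abs_nonneg x) (abs_nonneg x))]
    _ = (1+A) * ((1+|x|)^3 * Real.exp (A * |x| - x^2/2)) := by
        rw [← Real.exp_add]; ring_nf

/-- ∂/∂a of the integrand. -/
lemma hasDerivAt_f_a (x a : ℝ) :
    HasDerivAt (fun a : ℝ => x * Real.exp (-(x ^ 2 + a ^ 2) / 2) * I0 (a * x))
      (x * Real.exp (-(x ^ 2 + a ^ 2) / 2) * (x * besselI1 (a * x) - a * I0 (a * x))) a := by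
  have h0 : HasDerivAt (fun a : ℝ => -(x^2 + a^2)/2) (-a) a := by
    have := (((hasDerivAt_pow 2 a).const_add (x^2)).neg).div_const 2
    exact this.congr_deriv (by norm_num; ring)
  have h1 := h0.exp
  have h2 : HasDerivAt (fun a : ℝ => I0 (a * x)) (besselI1 (a * x) * x) a :=
    (hasDerivAt_I0 (a*x)).comp (h₂ := I0) a (by simpa using (hasDerivAt_id a).mul_const x)
  have h3 := (h1.mul h2).const_mul x
  refine (h3.congr_deriv (by ring)).congr_of_eventuallyEq (Filter.Eventually.of_forall fun a => ?_)
  simp only [Pi.mul_apply]; ring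

/-- ∂/∂x of the boundary function equals ∂/∂a of the integrand. -/
lemma hasDerivAt_g (a x : ℝ) :
    HasDerivAt (fun x : ℝ => -(x * Real.exp (-(x ^ 2 + a ^ 2) / 2) * besselI1 (a * x)))
      (x * Real.exp (-(x ^ 2 + a ^ 2) / 2) * (x * besselI1 (a * x) - a * I0 (a * x))) x := by
  have h0 : HasDerivAt (fun x : ℝ => -(x^2 + a^2)/2) (-x) x := by
    have := (((hasDerivAt_pow 2 x).add_const (a^2)).neg).div_const 2
    exact this.congr_deriv (by norm_num; ring)
  have h1 := h0.exp
  have h2 : HasDerivAt (fun x : ℝ => besselI1 (a * x)) (besselI2 (a * x) * a) x :=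
    (hasDerivAt_I1 (a*x)).comp x (by simpa using (hasDerivAt_id x).const_mul a)
  have h3 := (((hasDerivAt_id x).mul h1).mul h2).neg
  refine h3.congr_deriv ?_
  have hb := bessel_identity (a * x)
  simp only [id_eq, Pi.mul_apply]
  nlinarith [hb, Real.exp_pos (-(x^2+a^2)/2)]

lemma tendsto_g (a : ℝ) :
    Filter.Tendsto (fun x : ℝ => -(x * Real.exp (-(x ^ 2 + a ^ 2) / 2) * besselI1 (a * x)))
      Filter.atTop (nhds 0) := by
  apply squeeze_zero_norm' (a := fun x : ℝ => Real.exp ((|a|+1) * x - x^2/2))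
  · filter_upwards [Filter.eventually_ge_atTop (1:ℝ)] with x hx
    have hx0 : (0:ℝ) < x := by linarith
    rw [Real.norm_eq_abs, abs_neg, abs_mul, abs_mul, abs_of_pos (Real.exp_pos _),
      abs_of_pos hx0]
    have h1 : |besselI1 (a*x)| ≤ Real.exp (|a| * x) := by
      refine le_trans (I1_abs_le _) (Real.exp_le_exp.2 ?_)
      rw [abs_mul, abs_of_pos hx0]
    have h2 : Real.exp (-(x^2+a^2)/2) ≤ Real.exp (-(x^2)/2) := by
      apply Real.exp_le_exp.2; nlinarith [sq_nonneg a]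
    have hxe : x ≤ Real.exp x := by linarith [Real.add_one_le_exp x]
    calc x * Real.exp (-(x^2+a^2)/2) * |besselI1 (a*x)|
        ≤ Real.exp x * Real.exp (-(x^2)/2) * Real.exp (|a| * x) := by
          apply mul_le_mul _ h1 (abs_nonneg _) (by positivity)
          exact mul_le_mul hxe h2 (Real.exp_pos _).le (Real.exp_pos _).le
      _ = Real.exp ((|a|+1) * x - x^2/2) := by
          rw [← Real.exp_add, ← Real.exp_add]; ring_nf
  · apply Real.tendsto_exp_atBot.comp
    have h : Filter.Tendsto (fun x : ℝ => x * (x/2 - (|a|+1))) Filter.atTop Filter.atTop := by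
      apply Filter.Tendsto.atTop_mul_atTop₀ tendsto_id
      apply Filter.tendsto_atTop_add_const_right
      exact Filter.tendsto_id.atTop_div_const two_pos
    have heq : (fun x : ℝ => (|a|+1) * x - x^2/2) = (fun x : ℝ => -(x * (x/2 - (|a|+1)))) := by
      funext x; ring
    rw [heq]
    exact Filter.tendsto_neg_atTop_atBot.comp h

/-- Derivative of the Marcum Q-function in the noncentrality parameter. -/
lemma hasDerivAt_marcum (b a₀ : ℝ) :
    HasDerivAt (fun a => marcumQ a b)
      (b * Real.exp (-(b ^ 2 + a₀ ^ 2) / 2) * besselI1 (a₀ * b)) a₀ := by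
  set A := |a₀| + 1 with hA
  have hA0 : (0:ℝ) ≤ A := by positivity
  have hball : ∀ a ∈ Metric.ball a₀ 1, |a| ≤ A := by
    intro a haa
    have : |a - a₀| < 1 := by simpa [Real.dist_eq] using haa
    calc |a| = |a₀ + (a - a₀)| := by ring_nf
      _ ≤ |a₀| + |a - a₀| := abs_add_le _ _
      _ ≤ A := by rw [hA]; linarith
  obtain ⟨hint, hder⟩ := _root_.hasDerivAt_integral_of_dominated_loc_of_deriv_le
    (μ := volume.restrict (Set.Ioi b)) (x₀ := a₀)
    (F := fun a x => x * Real.exp (-(x ^ 2 + a ^ 2) / 2) * I0 (a * x))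
    (F' := fun a x => x * Real.exp (-(x ^ 2 + a ^ 2) / 2)
      * (x * besselI1 (a * x) - a * I0 (a * x)))
    (bound := fun x => (1+A) * ((1+|x|)^3 * Real.exp (A * |x| - x^2/2)))
    (Metric.ball_mem_nhds a₀ one_pos)
    (Filter.Eventually.of_forall fun a => (cont_f a).aestronglyMeasurable.restrict)
    (integrableOn_f a₀ b)
    ((cont_f' a₀).aestronglyMeasurable.restrict)
    (Filter.Eventually.of_forall fun x => fun a haa => f'_abs_le x hA0 (hball a haa))
    (((integrable_master A).const_mul (1+A)).restrict (s := Set.Ioi b))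
    (Filter.Eventually.of_forall fun x => fun a _ => hasDerivAt_f_a x a)
  have key : (∫ x in Set.Ioi b, x * Real.exp (-(x ^ 2 + a₀ ^ 2) / 2)
      * (x * besselI1 (a₀ * x) - a₀ * I0 (a₀ * x)))
      = b * Real.exp (-(b ^ 2 + a₀ ^ 2) / 2) * besselI1 (a₀ * b) := by
    rw [MeasureTheory.integral_Ioi_of_hasDerivAt_of_tendsto'
      (fun x _ => hasDerivAt_g a₀ x) hint (tendsto_g a₀)]
    ring
  rw [← key]
  exact hder

/-- Monotonicity of Marcum Q in the noncentrality parameter. -/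
lemma marcum_mono {a₁ a₂ : ℝ} (b : ℝ) (hb : 0 ≤ b) (h0 : 0 ≤ a₁) (h : a₁ ≤ a₂) :
    marcumQ a₁ b ≤ marcumQ a₂ b := by
  have hmono : MonotoneOn (fun a => marcumQ a b) (Set.Ici (0:ℝ)) := by
    apply monotoneOn_of_deriv_nonneg (convex_Ici 0)
    · exact fun a _ => (hasDerivAt_marcum b a).continuousAt.continuousWithinAt
    · exact fun a _ => (hasDerivAt_marcum b a).differentiableAt.differentiableWithinAt
    · intro a haa
      rw [interior_Ici] at haa
      rw [(hasDerivAt_marcum b a).deriv]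
      have h5 : 0 ≤ besselI1 (a * b) := I1_nonneg (mul_nonneg (le_of_lt haa) hb)
      exact mul_nonneg (mul_nonneg hb (Real.exp_pos _).le) h5
  exact hmono (Set.mem_Ici.2 h0) (Set.mem_Ici.2 (le_trans h0 h)) h

/-- Strict decrease of Marcum Q in the threshold. -/
lemma marcum_strict_anti (a : ℝ) {b₁ b₂ : ℝ} (hb₁ : 0 < b₁) (h : b₁ < b₂) :
    marcumQ a b₂ < marcumQ a b₁ := by
  have hsplit : marcumQ a b₁
      = (∫ x in Set.Ioc b₁ b₂, x * Real.exp (-(x ^ 2 + a ^ 2) / 2) * I0 (a * x))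
        + marcumQ a b₂ := by
    unfold marcumQ
    rw [← MeasureTheory.setIntegral_union (Set.Ioc_disjoint_Ioi le_rfl)
      measurableSet_Ioi ((integrableOn_f a b₁).mono_set Set.Ioc_subset_Ioi_self)
      (integrableOn_f a b₂), Set.Ioc_union_Ioi_eq_Ioi h.le]
  have hpos : 0 < ∫ x in Set.Ioc b₁ b₂, x * Real.exp (-(x ^ 2 + a ^ 2) / 2) * I0 (a * x) := by
    rw [← intervalIntegral.integral_of_le h.le]
    apply intervalIntegral.intervalIntegral_pos_of_pos_on
      ((cont_f a).intervalIntegrable _ _)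
    · intro x hx
      have hx0 : 0 < x := lt_trans hb₁ hx.1
      have := I0_pos (a * x)
      positivity
    · exact h
  linarith

end Aux

theorem stmt_11 (ε : ℝ) (hε₀ : 0 < ε) (hε₁ : ε < 1)
    (a₁ a₂ : ℝ) (ha₁ : 0 ≤ a₁) (ha : a₁ ≤ a₂)
    (r₁ r₂ : ℝ) (hr₁ : 0 < r₁) (hr₂ : 0 < r₂)
    (h₁ : marcumQ a₁ r₁ = ε) (h₂ : marcumQ a₂ r₂ = ε) :
    r₁ ≤ r₂ := by
  by_contra hcon
  push_neg at hcon
  have h3 : marcumQ a₂ r₁ < marcumQ a₂ r₂ := marcum_strict_anti a₂ hr₂ hcon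
  have h4 : marcumQ a₁ r₁ ≤ marcumQ a₂ r₁ := marcum_mono r₁ hr₁.le ha₁ ha
  linarith
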